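/- Let n ≥ 1. There exists a constant c₁ > 0 depending only on n with the following property: for every convex body K in ℝ^{n+1} whose support function h is nonnegative on S^n (equivalently, 0 ∈ K), one has ⨍_{S^n} h dθ ≥ c₁ · max_{S^n} h. -/

import Mathlib

open MeasureTheory Metric Real
open scoped InnerProductSpace ENNReal Topology

noncomputable section

/-- Euclidean space `ℝ^{n+1}`. -/
abbrev Eu (n : ℕ) : Type := EuclideanSpace ℝ (Fin (n + 1))

/-- The unit sphere `S^n ⊆ ℝ^{n+1}` as a subtype. -/
abbrev Sph (n : ℕ) : Type := Metric.sphere (0 : Eu n) 1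

/-- The spherical Lebesgue (surface) measure on `S^n`. -/
def sphMeas (n : ℕ) : Measure (Sph n) := (volume : Measure (Eu n)).toSphere

/-- The support function of a set `K ⊆ ℝ^{n+1}`. -/
def sfn {n : ℕ} (K : Set (Eu n)) (z : Eu n) : ℝ :=
  sSup ((fun y => ⟪z, y⟫_ℝ) '' K)

/-- The Hessian endomorphism `A(x) = D(∇ h_K)(x)`. -/
def hessA {n : ℕ} (K : Set (Eu n)) (x : Eu n) : Eu n →L[ℝ] Eu n :=
  fderiv ℝ (gradient (sfn K)) x

/-- The rank-one endomorphism `x ⊗ x : v ↦ ⟨v, x⟩ x`. -/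
def tens {n : ℕ} (x : Eu n) : Eu n →L[ℝ] Eu n :=
  (innerSL ℝ x).smulRight x

/-- `det (A(x) + x ⊗ x)`, the reciprocal Gauss curvature `1/𝒦` at `x ∈ S^n`. -/
def rK {n : ℕ} (K : Set (Eu n)) (x : Eu n) : ℝ :=
  LinearMap.det ((hessA K x + tens x : Eu n →L[ℝ] Eu n) : Eu n →ₗ[ℝ] Eu n)

/-- `K` is a smooth, strictly convex body with positive support function. -/
structure IsSmoothConvexBody {n : ℕ} (K : Set (Eu n)) : Prop where
  compact : IsCompact K
  convex : Convex ℝ K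
  interior_nonempty : (interior K).Nonempty
  pos : ∀ x : Sph n, 0 < sfn K x
  smooth : ContDiffOn ℝ (⊤ : ℕ∞) (sfn K) {(0 : Eu n)}ᶜ
  posdef : ∀ x : Sph n, ∀ v : Eu n, v ≠ 0 →
    0 < ⟪(hessA K (x : Eu n) + tens (x : Eu n)) v, v⟫_ℝ

/-- The density `h·det(A + x⊗x)` of the measure `dV` with respect to `dθ`. -/
def dens {n : ℕ} (K : Set (Eu n)) (x : Eu n) : ℝ := sfn K x * rK K x

/-- The centroid-type point `c(K) = (∫ ∇h_K dV)/(∫ dV)`. -/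
def cK {n : ℕ} (K : Set (Eu n)) : Eu n :=
  (∫ x : Sph n, dens K x ∂sphMeas n)⁻¹ •
    ∫ x : Sph n, dens K x • gradient (sfn K) x ∂sphMeas n

/-- The support function of the translated body `K - c(K)`. -/
def tsfn {n : ℕ} (K : Set (Eu n)) (x : Eu n) : ℝ := sfn K x - ⟪x, cK K⟫_ℝ

/-! If `y ∈ K` attains `h(x) = ⟪x, y⟫` then `h(x) ≤ ‖y‖`, and `h ≥ max 0 ⟪·, y⟫` on the sphere since
`h ≥ 0` there. The integral of `max 0 ⟪·, v⟫` over `S^n` is continuous, positive on unit vectors and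
positively homogeneous in `v`, so by compactness of the sphere it is at least `m ‖v‖` for some `m > 0`.
Hence `∫ h ≥ m ‖y‖ ≥ m h(x)`. -/

open Set

instance (n : ℕ) : IsFiniteMeasure (sphMeas n) := by unfold sphMeas; infer_instance

instance (n : ℕ) : (sphMeas n).IsOpenPosMeasure := by unfold sphMeas; infer_instance

lemma Continuous.integrable_sphMeas {n : ℕ} {f : Sph n → ℝ} (hf : Continuous f) :
    Integrable f (sphMeas n) :=
  hf.integrable_of_hasCompactSupport (.of_compactSpace f)

lemma continuous_posPart_inner (n : ℕ) (v : Eu n) :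
    Continuous fun y : Sph n => max 0 ⟪(y : Eu n), v⟫_ℝ :=
  continuous_const.max (continuous_subtype_val.inner continuous_const)

section SupportFunction

variable {n : ℕ} {K : Set (Eu n)}

lemma inner_le_sfn (hK : Bornology.IsBounded K) {y : Eu n} (hy : y ∈ K) (z : Eu n) :
    ⟪z, y⟫_ℝ ≤ sfn K z := by
  obtain ⟨R, hR⟩ := hK.exists_norm_le
  refine le_csSup ⟨‖z‖ * R, ?_⟩ (mem_image_of_mem _ hy)
  rintro _ ⟨w, hw, rfl⟩
  exact (real_inner_le_norm z w).trans (mul_le_mul_of_nonneg_left (hR w hw) (norm_nonneg z))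

lemma IsCompact.exists_sfn_eq_inner (hK : IsCompact K) (hne : K.Nonempty) (z : Eu n) :
    ∃ y ∈ K, sfn K z = ⟪z, y⟫_ℝ :=
  hK.exists_sSup_image_eq hne (continuous_const.inner continuous_id).continuousOn

lemma IsCompact.continuous_sfn (hK : IsCompact K) : Continuous (sfn K) :=
  hK.continuous_sSup (f := fun z y => ⟪z, y⟫_ℝ) continuous_inner

end SupportFunction

section PositivePartIntegral

variable (n : ℕ)

lemma continuous_integral_posPart_inner :
    Continuous fun v : Eu n => ∫ y, max 0 ⟪(y : Eu n), v⟫_ℝ ∂sphMeas n := by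
  have h := continuous_parametric_integral_of_continuous (μ := sphMeas n)
    (f := fun (v : Eu n) (y : Sph n) => max 0 ⟪(y : Eu n), v⟫_ℝ)
    (continuous_const.max (continuous_subtype_val.comp continuous_snd |>.inner continuous_fst))
    isCompact_univ
  simpa only [Measure.restrict_univ] using h

variable {n}

lemma integral_posPart_inner_pos {u : Eu n} (hu : u ∈ sphere (0 : Eu n) 1) :
    0 < ∫ y, max 0 ⟪(y : Eu n), u⟫_ℝ ∂sphMeas n := by
  refine integral_pos_of_integrable_nonneg_nonzero (x := ⟨u, hu⟩) (continuous_posPart_inner n u)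
    (continuous_posPart_inner n u).integrable_sphMeas
    (fun y => le_max_left _ _) ?_
  rw [real_inner_self_eq_norm_sq, mem_sphere_zero_iff_norm.mp hu]
  norm_num

variable (n)

lemma exists_pos_mul_norm_le_integral_posPart_inner :
    ∃ m > 0, ∀ v : Eu n, m * ‖v‖ ≤ ∫ y, max 0 ⟪(y : Eu n), v⟫_ℝ ∂sphMeas n := by
  obtain ⟨u₀, hu₀, hmin⟩ := (isCompact_sphere (0 : Eu n) 1).exists_isMinOn
    (NormedSpace.sphere_nonempty.mpr zero_le_one)
    (continuous_integral_posPart_inner n).continuousOn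
  refine ⟨_, integral_posPart_inner_pos hu₀, fun v => ?_⟩
  rcases eq_or_ne v 0 with rfl | hv
  · simp
  have hu : ‖v‖⁻¹ • v ∈ sphere (0 : Eu n) 1 := by
    rw [mem_sphere_zero_iff_norm, norm_smul, norm_inv, norm_norm,
      inv_mul_cancel₀ (norm_ne_zero_iff.mpr hv)]
  calc _ ≤ ‖v‖ * ∫ y, max 0 ⟪(y : Eu n), ‖v‖⁻¹ • v⟫_ℝ ∂sphMeas n := by
        rw [mul_comm]; exact mul_le_mul_of_nonneg_left (hmin hu) (norm_nonneg v)
    _ = ∫ y, max 0 ⟪(y : Eu n), v⟫_ℝ ∂sphMeas n := by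
        rw [← integral_const_mul]
        congr 1 with y
        rw [mul_max_of_nonneg _ _ (norm_nonneg v), real_inner_smul_right, mul_inv_cancel_left₀
          (norm_ne_zero_iff.mpr hv), mul_zero]

end PositivePartIntegral

lemma exists_pos_mul_norm_le_integral_sfn (n : ℕ) :
    ∃ m > 0, ∀ K : Set (Eu n), IsCompact K → (∀ x : Sph n, 0 ≤ sfn K (x : Eu n)) →
      ∀ y ∈ K, m * ‖y‖ ≤ ∫ x, sfn K (x : Eu n) ∂sphMeas n := by
  obtain ⟨m, hm, hmv⟩ := exists_pos_mul_norm_le_integral_posPart_inner n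
  refine ⟨m, hm, fun K hK hpos y hy => ?_⟩
  exact (hmv y).trans <| integral_mono (continuous_posPart_inner n y).integrable_sphMeas
    (hK.continuous_sfn.comp continuous_subtype_val).integrable_sphMeas
    fun x => max_le (hpos x) (inner_le_sfn hK.isBounded hy _)

theorem average_support_ge_max_general (n : ℕ) :
    ∃ c₁ : ℝ, 0 < c₁ ∧
      ∀ K : Set (Eu n), IsCompact K → Convex ℝ K → (interior K).Nonempty →
        (∀ x : Sph n, 0 ≤ sfn K (x : Eu n)) →
        ∀ x : Sph n, c₁ * sfn K (x : Eu n) ≤ ⨍ y : Sph n, sfn K (y : Eu n) ∂sphMeas n := by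
  obtain ⟨m, hm, hmK⟩ := exists_pos_mul_norm_le_integral_sfn n
  set T := sphMeas n |>.real univ
  have : Nonempty (Sph n) := (NormedSpace.sphere_nonempty.mpr zero_le_one).to_subtype
  have hT : 0 < T := measureReal_univ_pos
  refine ⟨m / T, div_pos hm hT, fun K hK _ hKint hpos x => ?_⟩
  obtain ⟨y, hyK, hxy⟩ := hK.exists_sfn_eq_inner (hKint.mono interior_subset) x
  have hx_le : sfn K x ≤ ‖y‖ := by
    simpa [hxy, mem_sphere_zero_iff_norm.mp x.2] using real_inner_le_norm (x : Eu n) y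
  rw [average_eq, smul_eq_mul, div_mul_eq_mul_div, inv_mul_eq_div]
  gcongr
  exact (mul_le_mul_of_nonneg_left hx_le hm.le).trans (hmK K hK hpos y hyK)

/-- There is `c₁ = c₁(n) > 0` such that, for every convex body `K` with nonnegative
support function on `S^n`, the mean of `h` over `S^n` is at least `c₁ · max h`. -/
theorem average_support_ge_max (n : ℕ) (hn : 1 ≤ n) :
    ∃ c₁ : ℝ, 0 < c₁ ∧
      ∀ K : Set (Eu n), IsCompact K → Convex ℝ K → (interior K).Nonempty →
        (∀ x : Sph n, 0 ≤ sfn K (x : Eu n)) →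
        ∀ x : Sph n, c₁ * sfn K (x : Eu n) ≤ ⨍ y : Sph n, sfn K (y : Eu n) ∂sphMeas n :=
  average_support_ge_max_general n
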